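/- Suppose A : [0,∞) → ℝ^{n×n} is continuous and there exist η > 0 with μ(A^{[k]}(t)) ≤ −η for all t ≥ 0, where μ is a matrix measure. Then the transition matrix Φ(t) of ẋ = A(t)x satisfies ||Φ^{(k)}(t)|| ≤ exp(−ηt) for all t ≥ 0. -/

import Mathlib

/-!
Since `X ↦ X^{(k)}` is multiplicative (Cauchy–Binet), differentiating `Φ(s)^{(k)}` along the
curve `s ↦ (1 + (s - t) A(t)) Φ(t)`, which is tangent to `Φ` at `t`, gives
`(Φ^{(k)})' = A^{[k]} Φ^{(k)}`. Realising the compound matrices as operators on `ℝ^{n choose k}`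
normed by `v`, `N` becomes the operator norm of a Banach algebra, in which
`‖X(t + h)‖ ≤ ‖1 + h C(t)‖ ‖X(t)‖ + o(h)` for `X' = C X`. So the right Dini derivative of `‖X‖`
is at most `μ(C(t)) ‖X(t)‖ ≤ -η ‖X(t)‖`, and Grönwall's inequality gives the bound.
-/

open Matrix

/-- The `k`-multiplicative compound of a matrix: the matrix of all `k × k` minors,
indexed by the `k`-element subsets of the row and column index sets (ordered
increasingly / lexicographically). -/
noncomputable def mulCompound {𝕜 : Type*} [CommRing 𝕜] {n m : ℕ}
    (A : Matrix (Fin n) (Fin m) 𝕜) (k : ℕ) :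
    Matrix {s : Finset (Fin n) // s.card = k} {t : Finset (Fin m) // t.card = k} 𝕜 :=
  fun α β => (A.submatrix (α.1.orderEmbOfFin α.2) (β.1.orderEmbOfFin β.2)).det

/-- The `k`-additive compound: `A^{[k]} := (d/dε) (I + ε A)^{(k)} |_{ε = 0}`. -/
noncomputable def addCompound {𝕜 : Type*} [NontriviallyNormedField 𝕜] {n : ℕ}
    (A : Matrix (Fin n) (Fin n) 𝕜) (k : ℕ) :
    Matrix {s : Finset (Fin n) // s.card = k} {s : Finset (Fin n) // s.card = k} 𝕜 :=
  fun α β => deriv (fun ε : 𝕜 => mulCompound (1 + ε • A) k α β) 0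

section CauchyBinet

open Equiv Finset

variable {R : Type*} [CommRing R] {k n : ℕ}

theorem det_mul_eq_sum_prod_mul_det_submatrix (P : Matrix (Fin k) (Fin n) R)
    (Q : Matrix (Fin n) (Fin k) R) :
    (P * Q).det = ∑ p : Fin k → Fin n, (∏ i, Q (p i) i) * (P.submatrix id p).det := by
  simp only [det_apply', mul_apply, prod_univ_sum, mul_sum, Fintype.piFinset_univ, submatrix_apply,
    id, prod_mul_distrib]
  rw [sum_comm]
  exact sum_congr rfl fun p _ => sum_congr rfl fun σ _ => by ring

theorem det_submatrix_id_eq_zero_of_not_injective (P : Matrix (Fin k) (Fin n) R)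
    {p : Fin k → Fin n} (hp : ¬Function.Injective p) : (P.submatrix id p).det = 0 := by
  obtain ⟨i, j, hpij, hij⟩ : ∃ i j, p i = p j ∧ i ≠ j := by
    simpa [Function.Injective] using hp
  exact det_zero_of_column_eq hij fun l => by simp [hpij]

theorem bijective_orderEmbOfFin_comp_perm :
    Function.Bijective fun x : {s : Finset (Fin n) // s.card = k} × Perm (Fin k) =>
      x.2.toEmbedding.trans (x.1.1.orderEmbOfFin x.1.2).toEmbedding := by
  classical
  refine (Fintype.bijective_iff_injective_and_card _).2 ⟨?_, ?_⟩
  · rintro ⟨⟨s, hs⟩, σ⟩ ⟨⟨t, ht⟩, τ⟩ h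
    have himage : ∀ (s : Finset (Fin n)) (hs : s.card = k) (σ : Perm (Fin k)),
        univ.image (fun i => s.orderEmbOfFin hs (σ i)) = s := by
      intro s hs σ
      rw [← Finset.coe_inj, coe_image, coe_univ, Set.image_univ]
      exact (σ.surjective.range_comp _).trans (range_orderEmbOfFin s hs)
    obtain rfl : s = t := by
      rw [← himage s hs σ, ← himage t ht τ]
      exact congrArg (fun f : Fin k ↪ Fin n => univ.image f) h
    refine Prod.ext rfl (Equiv.ext fun i => (s.orderEmbOfFin hs).injective ?_)
    exact DFunLike.congr_fun h i
  · simp [Fintype.card_embedding_eq, Nat.descFactorial_eq_factorial_mul_choose, Fintype.card_perm,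
      mul_comm]

theorem cauchy_binet (P : Matrix (Fin k) (Fin n) R) (Q : Matrix (Fin n) (Fin k) R) :
    (P * Q).det = ∑ γ : {s : Finset (Fin n) // s.card = k},
      (P.submatrix id (γ.1.orderEmbOfFin γ.2)).det *
        (Q.submatrix (γ.1.orderEmbOfFin γ.2) id).det := by
  rw [det_mul_eq_sum_prod_mul_det_submatrix,
    ← Fintype.sum_of_injective (fun e : Fin k ↪ Fin n => ⇑e) DFunLike.coe_injective _ _
      (fun p hp => by
        rw [det_submatrix_id_eq_zero_of_not_injective P fun h => hp ⟨⟨p, h⟩, rfl⟩, mul_zero])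
      fun _ => rfl,
    ← Fintype.sum_bijective _ bijective_orderEmbOfFin_comp_perm _ _ fun _ => rfl,
    Fintype.sum_prod_type]
  refine sum_congr rfl fun γ _ => ?_
  have hperm : ∀ σ : Perm (Fin k), (P.submatrix id (γ.1.orderEmbOfFin γ.2 ∘ σ)).det
      = Perm.sign σ * (P.submatrix id (γ.1.orderEmbOfFin γ.2)).det := fun σ => by
    rw [← det_permute', submatrix_submatrix, Function.id_comp]
  simp only [Function.Embedding.coe_trans, Equiv.coe_toEmbedding, RelEmbedding.coe_toEmbedding,
    hperm, det_apply' (Q.submatrix _ id), mul_sum, submatrix_apply, id]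
  exact sum_congr rfl fun σ _ => by simp only [Function.comp_apply]; ring

end CauchyBinet

section MulCompound

variable {R : Type*} [CommRing R] {n k : ℕ}

theorem mulCompound_mul (X Y : Matrix (Fin n) (Fin n) R) :
    mulCompound (X * Y) k = mulCompound X k * mulCompound Y k := by
  ext α β
  rw [mulCompound, submatrix_mul X Y _ id _ Function.bijective_id, cauchy_binet]
  rfl

theorem mulCompound_one : mulCompound (1 : Matrix (Fin n) (Fin n) R) k = 1 := by
  ext α β
  by_cases h : α = β
  · subst h
    rw [mulCompound, submatrix_one _ (α.1.orderEmbOfFin α.2).injective, det_one, one_apply_eq]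
  · obtain ⟨b, hbβ, hbα⟩ : ∃ b ∈ β.1, b ∉ α.1 := by
      by_contra! h'
      exact h (Subtype.ext (Finset.eq_of_subset_of_card_le h' (by rw [α.2, β.2])).symm)
    obtain ⟨j, rfl⟩ : b ∈ Set.range (β.1.orderEmbOfFin β.2) := by
      rwa [Finset.range_orderEmbOfFin]
    rw [one_apply_ne h, mulCompound]
    refine det_eq_zero_of_column_eq_zero j fun i => one_apply_ne ?_
    rintro heq
    exact hbα (heq ▸ Finset.orderEmbOfFin_mem α.1 α.2 i)

end MulCompound

section CompoundDerivative

open scoped Matrix.Norms.Elementwise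

variable {n k : ℕ}

theorem differentiable_mulCompound_apply (α β : {s : Finset (Fin n) // s.card = k}) :
    Differentiable ℝ fun X : Matrix (Fin n) (Fin n) ℝ => mulCompound X k α β := by
  simp only [mulCompound, det_apply', submatrix_apply]
  fun_prop

theorem differentiable_mulCompound :
    Differentiable ℝ fun X : Matrix (Fin n) (Fin n) ℝ => mulCompound X k :=
  differentiable_pi.2 fun α => differentiable_pi.2 (differentiable_mulCompound_apply α)

theorem hasDerivAt_mulCompound_one_add_smul (A : Matrix (Fin n) (Fin n) ℝ) :
    HasDerivAt (fun ε : ℝ => mulCompound (1 + ε • A) k) (addCompound A k) 0 :=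
  hasDerivAt_pi.2 fun α => hasDerivAt_pi.2 fun β =>
    ((differentiable_mulCompound_apply α β _).comp 0
      (by fun_prop : DifferentiableAt ℝ (fun ε : ℝ => 1 + ε • A) 0)).hasDerivAt

theorem hasDerivAt_mulCompound {Φ : ℝ → Matrix (Fin n) (Fin n) ℝ} {A : Matrix (Fin n) (Fin n) ℝ}
    {t : ℝ} (hΦ : HasDerivAt Φ (A * Φ t) t) :
    HasDerivAt (fun s => mulCompound (Φ s) k) (addCompound A k * mulCompound (Φ t) k) t := by
  have hF := (differentiable_mulCompound (k := k) (Φ t)).hasFDerivAt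
  have hline : HasDerivAt (fun s => (1 + (s - t) • A) * Φ t) (A * Φ t) t := by
    have : (fun s => (1 + (s - t) • A) * Φ t) = fun s => Φ t + (s - t) • (A * Φ t) := by
      ext1 s
      rw [add_mul, one_mul, smul_mul_assoc]
    rw [this]
    exact ((((hasDerivAt_id t).sub_const t).smul_const (A * Φ t)).const_add (Φ t)).congr_deriv
      (one_smul ℝ _)
  have hviaF : HasDerivAt (fun s => mulCompound ((1 + (s - t) • A) * Φ t) k)
      (fderiv ℝ (fun X => mulCompound X k) (Φ t) (A * Φ t)) t :=
    hF.comp_hasDerivAt_of_eq t hline (by simp)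
  have hfactor : HasDerivAt (fun s => mulCompound ((1 + (s - t) • A) * Φ t) k)
      (addCompound A k * mulCompound (Φ t) k) t := by
    have hshift : HasDerivAt (fun s => mulCompound (1 + (s - t) • A) k) (addCompound A k) t := by
      have h := hasDerivAt_mulCompound_one_add_smul (k := k) A
      rw [← sub_self t] at h
      exact h.comp_sub_const t t
    simp only [mulCompound_mul]
    exact (LinearMap.mulRight ℝ (mulCompound (Φ t) k)).toContinuousLinearMap.hasFDerivAt
      |>.comp_hasDerivAt t hshift
  rw [← hviaF.unique hfactor]
  exact hF.comp_hasDerivAt t hΦ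

theorem AlgHom.hasDerivAt_map_mulCompound {𝔸 : Type*} [NormedRing 𝔸] [NormedAlgebra ℝ 𝔸]
    [FiniteDimensional ℝ 𝔸]
    (T : Matrix {s : Finset (Fin n) // s.card = k} {s : Finset (Fin n) // s.card = k} ℝ →ₐ[ℝ] 𝔸)
    {Φ : ℝ → Matrix (Fin n) (Fin n) ℝ} {A : Matrix (Fin n) (Fin n) ℝ} {t : ℝ}
    (hΦ : ∀ i j, HasDerivAt (fun s => Φ s i j) ((A * Φ t) i j) t) :
    HasDerivAt (fun s => T (mulCompound (Φ s) k)) (T (addCompound A k) * T (mulCompound (Φ t) k))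
      t := by
  rw [← map_mul]
  exact (LinearMap.toContinuousLinearMap T.toLinearMap).hasFDerivAt.comp_hasDerivAt t
    (hasDerivAt_mulCompound (hasDerivAt_pi.2 fun i => hasDerivAt_pi.2 (hΦ i)))

end CompoundDerivative

section Coppel

open Filter Topology

variable {𝔸 : Type*} [NormedRing 𝔸] [NormedAlgebra ℝ 𝔸]

theorem eventually_slope_norm_lt {X : ℝ → 𝔸} {C : 𝔸} {t m r : ℝ}
    (hX : HasDerivAt X (C * X t) t)
    (hm : Tendsto (fun ε : ℝ => (‖1 + ε • C‖ - 1) / ε) (𝓝[>] 0) (𝓝 m)) (hr : m * ‖X t‖ < r) :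
    ∀ᶠ z in 𝓝[>] t, (z - t)⁻¹ * (‖X z‖ - ‖X t‖) < r := by
  set g := fun z => slope X t z - C * X t
  have hg : Tendsto g (𝓝[>] t) (𝓝 0) := by
    simpa [g] using ((hasDerivAt_iff_tendsto_slope.1 hX).mono_left
      (nhdsWithin_mono t fun z (hz : z ∈ Set.Ioi t) => hz.ne')).sub_const (C * X t)
  have hshift : Tendsto (fun z => z - t) (𝓝[>] t) (𝓝[>] 0) :=
    tendsto_nhdsWithin_of_tendsto_nhds_of_eventually_within _
      (((continuous_sub_right t).tendsto' t 0 (sub_self t)).mono_left nhdsWithin_le_nhds)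
      (eventually_mem_nhdsWithin.mono fun z (hz : t < z) => sub_pos.2 hz)
  have hlim : Tendsto (fun z => (‖1 + (z - t) • C‖ - 1) / (z - t) * ‖X t‖ + ‖g z‖) (𝓝[>] t)
      (𝓝 (m * ‖X t‖ + 0)) := by
    simpa using ((hm.comp hshift).mul_const ‖X t‖).add hg.norm
  filter_upwards [hlim.eventually_lt_const (by simpa using hr), self_mem_nhdsWithin] with z hlt hz
  have hzt : 0 < z - t := sub_pos.2 hz
  have hXz : X z = (1 + (z - t) • C) * X t + (z - t) • g z := by
    simp only [g, smul_sub, sub_smul_slope, vsub_eq_sub, add_mul, one_mul, smul_mul_assoc]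
    abel
  have hnorm : ‖X z‖ ≤ ‖1 + (z - t) • C‖ * ‖X t‖ + (z - t) * ‖g z‖ := by
    rw [hXz]
    refine (norm_add_le _ _).trans (add_le_add (norm_mul_le _ _) ?_)
    rw [norm_smul, Real.norm_of_nonneg hzt.le]
  refine lt_of_le_of_lt ?_ hlt
  rw [inv_mul_le_iff₀ hzt]
  calc ‖X z‖ - ‖X t‖ ≤ (‖1 + (z - t) • C‖ - 1) * ‖X t‖ + (z - t) * ‖g z‖ := by linarith
    _ = (z - t) * ((‖1 + (z - t) • C‖ - 1) / (z - t) * ‖X t‖ + ‖g z‖) := by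
      field_simp

theorem norm_le_norm_mul_exp_of_hasDerivAt {X C : ℝ → 𝔸} {μ : ℝ → ℝ} {a : ℝ}
    (hX : ∀ t, 0 ≤ t → HasDerivAt X (C t * X t) t)
    (hμ : ∀ t, 0 ≤ t → Tendsto (fun ε : ℝ => (‖1 + ε • C t‖ - 1) / ε) (𝓝[>] 0) (𝓝 (μ t)))
    (hμa : ∀ t, 0 ≤ t → μ t ≤ a) {t : ℝ} (ht : 0 ≤ t) :
    ‖X t‖ ≤ ‖X 0‖ * Real.exp (a * t) := by
  have h := le_gronwallBound_of_liminf_deriv_right_le (f := fun s => ‖X s‖)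
    (f' := fun s => a * ‖X s‖) (K := a) (ε := 0) (a := 0) (b := t)
    (fun s hs => (hX s hs.1).continuousAt.norm.continuousWithinAt)
    (fun s hs r hr => (eventually_slope_norm_lt (hX s hs.1) (hμ s hs.1)
      ((mul_le_mul_of_nonneg_right (hμa s hs.1) (norm_nonneg _)).trans_lt hr)).frequently)
    le_rfl (fun s _ => by simp) t ⟨ht, le_rfl⟩
  simpa [gronwallBound_ε0] using h

end Coppel

/-- `ι → ℝ` under another name, so that it can carry a norm other than the sup norm. -/
def Coordinates (ι : Type*) : Type _ := ι → ℝ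

instance (ι : Type*) : AddCommGroup (Coordinates ι) := inferInstanceAs (AddCommGroup (ι → ℝ))

instance (ι : Type*) : Module ℝ (Coordinates ι) := inferInstanceAs (Module ℝ (ι → ℝ))

instance (ι : Type*) [Finite ι] : FiniteDimensional ℝ (Coordinates ι) :=
  inferInstanceAs (FiniteDimensional ℝ (ι → ℝ))

open Filter in
theorem coppel_k_contracting_general {n : ℕ} (k : ℕ)
    (A Φ : ℝ → Matrix (Fin n) (Fin n) ℝ)
    (hΦ : ∀ t, 0 ≤ t → ∀ i j, HasDerivAt (fun s => Φ s i j) ((A t * Φ t) i j) t)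
    (hΦ0 : Φ 0 = 1)
    -- a vector norm `v` on the compound space
    (v : ({s : Finset (Fin n) // s.card = k} → ℝ) → ℝ)
    (hv0 : ∀ x, 0 ≤ v x) (hveq : ∀ x, v x = 0 ↔ x = 0)
    (hvsmul : ∀ (c : ℝ) x, v (c • x) = |c| * v x)
    (hvadd : ∀ x y, v (x + y) ≤ v x + v y)
    -- the induced matrix norm
    (N : Matrix {s : Finset (Fin n) // s.card = k} {s : Finset (Fin n) // s.card = k} ℝ → ℝ)
    (hN : ∀ B, N B = sSup (Set.image (fun x => v (B.mulVec x)) {x | v x = 1}))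
    -- the induced matrix measure `μ(B) = lim_{ε↓0} (‖I + εB‖ - 1)/ε`
    (μ : Matrix {s : Finset (Fin n) // s.card = k} {s : Finset (Fin n) // s.card = k} ℝ → ℝ)
    (hμ : ∀ B, Tendsto (fun ε : ℝ => (N (1 + ε • B) - 1) / ε) (nhdsWithin 0 (Set.Ioi 0))
        (nhds (μ B)))
    (η : ℝ)
    (hcontr : ∀ t, 0 ≤ t → μ (addCompound (A t) k) ≤ -η) :
    ∀ t, 0 ≤ t → N (mulCompound (Φ t) k) ≤ Real.exp (-η * t) := by
  intro t ht
  let : Norm (Coordinates {s : Finset (Fin n) // s.card = k}) := ⟨v⟩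
  have core : NormedSpace.Core ℝ (Coordinates {s : Finset (Fin n) // s.card = k}) :=
    ⟨⟨hv0, hvsmul, hvadd⟩, hveq⟩
  let := NormedAddCommGroup.ofCore core
  let := NormedSpace.ofCore core
  let T := (Module.End.toContinuousLinearMap
      (Coordinates {s : Finset (Fin n) // s.card = k})).toAlgHom.comp
    (Matrix.toLinAlgEquiv' (R := ℝ) (n := {s : Finset (Fin n) // s.card = k})).toAlgHom
  have hNT : ∀ B, N B = ‖T B‖ := fun B => by
    rw [hN, ← (T B).sSup_sphere_eq_norm]
    congr 1
    ext r
    simp only [Set.mem_image, Set.mem_ofPred_eq, mem_sphere_zero_iff_norm]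
    rfl
  have hcoppel := norm_le_norm_mul_exp_of_hasDerivAt
    (X := fun s => T (mulCompound (Φ s) k)) (μ := fun s => μ (addCompound (A s) k))
    (fun s hs => T.hasDerivAt_map_mulCompound (hΦ s hs))
    (fun s _ => by simpa only [hNT, map_add, map_one, map_smul] using hμ (addCompound (A s) k))
    hcontr ht
  have hX0 : ‖T (mulCompound (Φ 0) k)‖ ≤ 1 := by
    rw [hΦ0, mulCompound_one, map_one]
    exact ContinuousLinearMap.norm_id_le
  rw [hNT]
  exact hcoppel.trans (mul_le_of_le_one_left (Real.exp_nonneg _) hX0)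

open Filter in
/-- Coppel: if `μ(A^{[k]}(t)) ≤ -η < 0` for all `t ≥ 0`, where `μ` is the matrix measure
induced by (the operator norm of) a vector norm `v`, then the transition matrix satisfies
`‖Φ^{(k)}(t)‖ ≤ exp(-η t)` for all `t ≥ 0`. -/
theorem coppel_k_contracting {n : ℕ} (k : ℕ) (hk1 : 1 ≤ k) (hk : k ≤ n)
    (A Φ : ℝ → Matrix (Fin n) (Fin n) ℝ)
    (hA : ∀ i j, Continuous (fun t => A t i j))
    (hΦ : ∀ t, 0 ≤ t → ∀ i j, HasDerivAt (fun s => Φ s i j) ((A t * Φ t) i j) t)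
    (hΦ0 : Φ 0 = 1)
    -- a vector norm `v` on the compound space
    (v : ({s : Finset (Fin n) // s.card = k} → ℝ) → ℝ)
    (hv0 : ∀ x, 0 ≤ v x) (hveq : ∀ x, v x = 0 ↔ x = 0)
    (hvsmul : ∀ (c : ℝ) x, v (c • x) = |c| * v x)
    (hvadd : ∀ x y, v (x + y) ≤ v x + v y)
    -- the induced matrix norm
    (N : Matrix {s : Finset (Fin n) // s.card = k} {s : Finset (Fin n) // s.card = k} ℝ → ℝ)
    (hN : ∀ B, N B = sSup (Set.image (fun x => v (B.mulVec x)) {x | v x = 1}))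
    -- the induced matrix measure `μ(B) = lim_{ε↓0} (‖I + εB‖ - 1)/ε`
    (μ : Matrix {s : Finset (Fin n) // s.card = k} {s : Finset (Fin n) // s.card = k} ℝ → ℝ)
    (hμ : ∀ B, Tendsto (fun ε : ℝ => (N (1 + ε • B) - 1) / ε) (nhdsWithin 0 (Set.Ioi 0))
        (nhds (μ B)))
    (η : ℝ) (hη : 0 < η)
    (hcontr : ∀ t, 0 ≤ t → μ (addCompound (A t) k) ≤ -η) :
    ∀ t, 0 ≤ t → N (mulCompound (Φ t) k) ≤ Real.exp (-η * t) :=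
  coppel_k_contracting_general k A Φ hΦ hΦ0 v hv0 hveq hvsmul hvadd N hN μ hμ η hcontr
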